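/- arXiv:0710.4376 — 2 statements merged into one kernel-verified Lean document; each statement's English description precedes it below -/
import Mathlib

section
/- If 𝒜 has property (P₂), then 𝒜 has property (P₁). -/
open scoped Pointwise

/-- The `m`-fold sumset of a finite set `A ⊆ ℕ`, with `0 • A = {0}`. -/
def sumset (A : Finset ℕ) : ℕ → Finset ℕ
  | 0 => {0}
  | m + 1 => sumset A m + A

/-- A subset of `ℕ` is full iff it equals `{0, 1, …, n}` for some `n`. -/
def IsFull (B : Finset ℕ) : Prop := ∃ n : ℕ, B = Finset.Iic n

/-- `{i, …, j}` is a gap of `B`: disjoint from `B`, with `i - 1 ∈ B` and `j + 1 ∈ B`. -/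
def IsGap (B : Finset ℕ) (i j : ℕ) : Prop :=
  1 ≤ i ∧ i ≤ j ∧ (∀ k, i ≤ k → k ≤ j → k ∉ B) ∧ i - 1 ∈ B ∧ j + 1 ∈ B

/-- `λ(B)`: the maximal length of a gap of `B` (`0` if there are no gaps). -/
noncomputable def gapLen (B : Finset ℕ) : ℕ :=
  sSup {n | ∃ i j, IsGap B i j ∧ n = j - i + 1}

/-- Property `(P₁)`. -/
def P1 (A : Finset ℕ) (α : ℕ) : Prop :=
  ∀ m : ℕ, ¬ IsFull (sumset A m) → ¬ IsFull (sumset A m + ({0, α} : Finset ℕ))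

/-- Property `(P₂)`. -/
def P2 (A : Finset ℕ) (α : ℕ) : Prop :=
  ∀ m : ℕ, ¬ IsFull (sumset A m) →
    ¬ ((∀ k, k ≤ α → k ∈ sumset A m) ∧
       (∀ k, (m - 1) * α ≤ k → k ≤ m * α → k ∈ sumset A m))

/-- The combinatorial reduction number `r(𝒜)`. -/
noncomputable def rA (A : Finset ℕ) (α : ℕ) : ℕ :=
  sInf {r : ℕ | sumset A (r + 1) = ({0, α} : Finset ℕ) + sumset A r}

/-- The combinatorial regularity `reg(𝒜)`. -/
noncomputable def regA (A : Finset ℕ) : ℕ :=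
  sInf {m : ℕ | 1 ≤ m ∧ IsFull (sumset A m)}


lemma sumset_zero_mem (A : Finset ℕ) (h0 : 0 ∈ A) (m : ℕ) : 0 ∈ sumset A m := by
  induction m with
  | zero => simp [sumset]
  | succ m ih => simpa [sumset] using Finset.add_mem_add ih h0

lemma sumset_le (A : Finset ℕ) (α : ℕ) (hle : ∀ a ∈ A, a ≤ α) (m : ℕ) :
    ∀ x ∈ sumset A m, x ≤ m * α := by
  induction m with
  | zero => simp [sumset]
  | succ m ih =>
    intro x hx
    rw [sumset] at hx
    obtain ⟨b, hb, c, hc, rfl⟩ := Finset.mem_add.mp hx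
    have h1 := ih b hb
    have h2 := hle c hc
    nlinarith

lemma sumset_mul_mem (A : Finset ℕ) (α : ℕ) (h0 : 0 ∈ A) (hαA : α ∈ A) (m : ℕ) :
    ∀ j ≤ m, j * α ∈ sumset A m := by
  induction m with
  | zero => intro j hj; interval_cases j; simp [sumset]
  | succ m ih =>
    intro j hj
    by_cases hjm : j ≤ m
    · have := Finset.add_mem_add (ih j hjm) h0
      simpa [sumset] using this
    · have hj' : j = m + 1 := by omega
      subst hj'
      have := Finset.add_mem_add (ih m le_rfl) hαA
      rw [sumset]
      convert this using 1
      ring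

/-- If `𝒜` has property `(P₂)`, then `𝒜` has property `(P₁)`. -/
theorem stmt_7 (𝒜 : Finset ℕ) (hne : 𝒜.Nonempty) (h0 : 0 ∈ 𝒜)
    (α : ℕ) (hα : α = 𝒜.max' hne) (hα2 : 2 ≤ α) :
    P2 𝒜 α → P1 𝒜 α := by
  intro hP2 m hnf hfull
  obtain ⟨n, hn⟩ := hfull
  rcases m with _ | m
  · exact hnf ⟨0, by ext x; simp [sumset]⟩
  have hαA : α ∈ 𝒜 := hα ▸ 𝒜.max'_mem hne
  have hle : ∀ a ∈ 𝒜, a ≤ α := fun a ha => hα ▸ Finset.le_max' 𝒜 a ha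
  have hB_le := sumset_le 𝒜 α hle (m + 1)
  have hmul := sumset_mul_mem 𝒜 α h0 hαA (m + 1)
  have hn_ge : (m + 1) * α + α ≤ n := by
    have hmem : (m + 1) * α + α ∈ sumset 𝒜 (m + 1) + ({0, α} : Finset ℕ) :=
      Finset.add_mem_add (hmul (m + 1) le_rfl) (by simp)
    rw [hn] at hmem
    simpa using hmem
  apply hP2 (m + 1) hnf
  constructor
  · intro k hk
    rcases eq_or_lt_of_le hk with rfl | hlt
    · simpa using hmul 1 (by omega)
    · have hkn : k ∈ Finset.Iic n := Finset.mem_Iic.mpr (by linarith [Nat.le_mul_of_pos_left α (Nat.succ_pos m)])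
      rw [← hn] at hkn
      obtain ⟨b, hb, c, hc, hbc⟩ := Finset.mem_add.mp hkn
      simp only [Finset.mem_insert, Finset.mem_singleton] at hc
      rcases hc with rfl | rfl
      · simpa [← hbc] using hb
      · omega
  · intro k hk1 hk2
    simp only [Nat.add_sub_cancel] at hk1
    have hkn : k + α ∈ Finset.Iic n := Finset.mem_Iic.mpr (by linarith)
    rw [← hn] at hkn
    obtain ⟨b, hb, c, hc, hbc⟩ := Finset.mem_add.mp hkn
    simp only [Finset.mem_insert, Finset.mem_singleton] at hc
    rcases hc with rfl | rfl
    · have hb' := hB_le b hb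
      have hmα : (m + 1) * α = m * α + α := by ring
      have hk : k = m * α := by omega
      subst hk
      exact hmul m (by omega)
    · have hbk : b = k := by omega
      subst hbk
      exact hb
end

section
/- Assume 𝒜 is smooth. Then 𝒜 has property (P₁) if and only if r(𝒜) = reg(𝒜), where r(𝒜) := min{r ∈ ℕ : (r+1)𝒜 = {0, α} + r𝒜} and reg(𝒜) := min{m ≥ 1 : m𝒜 is full}. -/
open scoped Pointwise

section Lemmas

variable {𝒜 : Finset ℕ} {α : ℕ}

lemma zero_mem_sumset (h0 : 0 ∈ 𝒜) : ∀ m, 0 ∈ sumset 𝒜 m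
  | 0 => by simp [sumset]
  | m + 1 => by
      have := zero_mem_sumset h0 m
      simpa [sumset] using Finset.add_mem_add this h0

lemma add_mem_sumset {x y p q : ℕ} (hx : x ∈ sumset 𝒜 p)
    (hy : y ∈ sumset 𝒜 q) : x + y ∈ sumset 𝒜 (p + q) := by
  induction q generalizing y with
  | zero => simp [sumset] at hy; simpa [hy] using hx
  | succ n ih =>
      simp only [sumset, Finset.mem_add] at hy ⊢
      obtain ⟨b, hb, c, hc, rfl⟩ := hy
      exact ⟨x + b, ih hb, c, hc, by ring⟩

lemma mul_mem_sumset {a : ℕ} (ha : a ∈ 𝒜) : ∀ m, m * a ∈ sumset 𝒜 m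
  | 0 => by simp [sumset]
  | m + 1 => by
      have := mul_mem_sumset ha m
      have h2 : m * a + a ∈ sumset 𝒜 (m + 1) := by
        simpa [sumset] using Finset.add_mem_add this ha
      simpa [add_one_mul] using h2

lemma sumset_mono (h0 : 0 ∈ 𝒜) {p q : ℕ} (h : p ≤ q) : sumset 𝒜 p ⊆ sumset 𝒜 q := by
  intro x hx
  have := add_mem_sumset hx (zero_mem_sumset h0 (q - p))
  simpa [Nat.add_sub_cancel' h] using this

lemma le_of_mem_sumset (hne : 𝒜.Nonempty) (hα : α = 𝒜.max' hne) :
    ∀ {m x}, x ∈ sumset 𝒜 m → x ≤ m * α := by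
  intro m
  induction m with
  | zero => intro x hx; simp [sumset] at hx; simp [hx]
  | succ n ih =>
      intro x hx
      simp only [sumset, Finset.mem_add] at hx
      obtain ⟨b, hb, c, hc, rfl⟩ := hx
      have h1 := ih hb
      have h2 : c ≤ α := hα ▸ Finset.le_max' 𝒜 c hc
      calc b + c ≤ n * α + α := Nat.add_le_add h1 h2
        _ = (n+1) * α := by ring

lemma full_iff (hne : 𝒜.Nonempty) (hα : α = 𝒜.max' hne) {m : ℕ} :
    IsFull (sumset 𝒜 m) ↔ sumset 𝒜 m = Finset.Iic (m * α) := by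
  constructor
  · rintro ⟨n, hn⟩
    have hαA : α ∈ 𝒜 := hα ▸ 𝒜.max'_mem hne
    have h1 : m * α ≤ n := by
      have := mul_mem_sumset hαA m
      rw [hn] at this; simpa using this
    have h2 : n ≤ m * α := by
      have : n ∈ sumset 𝒜 m := by rw [hn]; simp
      exact le_of_mem_sumset hne hα this
    rw [hn, Nat.le_antisymm h2 h1]
  · intro h; exact ⟨m * α, h⟩

lemma zeroalpha_add_Iic {n : ℕ} (h : α ≤ n + 1) :
    ({0, α} : Finset ℕ) + Finset.Iic n = Finset.Iic (n + α) := by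
  ext x
  simp only [Finset.mem_add, Finset.mem_insert, Finset.mem_singleton, Finset.mem_Iic]
  constructor
  · rintro ⟨y, hy, z, hz, rfl⟩; omega
  · intro hx
    rcases le_or_gt x n with h' | h'
    · exact ⟨0, Or.inl rfl, x, h', by ring⟩
    · exact ⟨α, Or.inr rfl, x - α, by omega, by omega⟩

lemma zeroalpha_add_subset (hne : 𝒜.Nonempty) (hα : α = 𝒜.max' hne) (h0 : 0 ∈ 𝒜) (m : ℕ) :
    ({0, α} : Finset ℕ) + sumset 𝒜 m ⊆ sumset 𝒜 (m + 1) := by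
  have hαA : α ∈ 𝒜 := hα ▸ 𝒜.max'_mem hne
  have hsub : ({0, α} : Finset ℕ) ⊆ 𝒜 := by
    intro x hx
    simp only [Finset.mem_insert, Finset.mem_singleton] at hx
    rcases hx with rfl | rfl <;> assumption
  calc ({0, α} : Finset ℕ) + sumset 𝒜 m ⊆ 𝒜 + sumset 𝒜 m :=
        Finset.add_subset_add_right hsub
    _ = sumset 𝒜 m + 𝒜 := add_comm _ _
    _ = sumset 𝒜 (m + 1) := rfl

lemma full_succ (hne : 𝒜.Nonempty) (hα : α = 𝒜.max' hne) (h0 : 0 ∈ 𝒜) {m : ℕ}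
    (hm : 1 ≤ m) (h : sumset 𝒜 m = Finset.Iic (m * α)) :
    sumset 𝒜 (m + 1) = Finset.Iic ((m + 1) * α) := by
  apply Finset.Subset.antisymm
  · intro x hx
    simpa using le_of_mem_sumset hne hα hx
  · have h2 : Finset.Iic ((m + 1) * α) = ({0, α} : Finset ℕ) + Finset.Iic (m * α) := by
      rw [zeroalpha_add_Iic (by nlinarith)]
      ring_nf
    rw [h2, ← h]
    exact zeroalpha_add_subset hne hα h0 m

lemma full_of_le (hne : 𝒜.Nonempty) (hα : α = 𝒜.max' hne) (h0 : 0 ∈ 𝒜) {m k : ℕ}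
    (hm : 1 ≤ m) (h : sumset 𝒜 m = Finset.Iic (m * α)) (hk : m ≤ k) :
    sumset 𝒜 k = Finset.Iic (k * α) := by
  induction k with
  | zero => omega
  | succ n ih =>
      rcases Nat.lt_or_ge m (n + 1) with h' | h'
      · exact full_succ hne hα h0 (by omega) (ih (by omega))
      · have : m = n + 1 := by omega
        rw [← this]; exact h

lemma full_two_alpha (hne : 𝒜.Nonempty) (h0 : 0 ∈ 𝒜)
    (hα : α = 𝒜.max' hne) (hα2 : 2 ≤ α) (h1 : 1 ∈ 𝒜) (hαm1 : α - 1 ∈ 𝒜) :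
    sumset 𝒜 (2 * α) = Finset.Iic (2 * α * α) := by
  have hαA : α ∈ 𝒜 := hα ▸ 𝒜.max'_mem hne
  apply Finset.Subset.antisymm
  · intro x hx
    simpa using le_of_mem_sumset hne hα hx
  · intro n hn
    simp only [Finset.mem_Iic] at hn
    obtain ⟨q, s, hqs, hs⟩ : ∃ q s, n = α * q + s ∧ s < α :=
      ⟨n / α, n % α, by rw [Nat.div_add_mod], Nat.mod_lt _ (by omega)⟩
    rcases le_or_gt n ((α - 1) * (α - 1)) with hsmall | hbig
    · have hq : q ≤ α - 1 := by nlinarith [Nat.sub_add_cancel (by omega : 1 ≤ α)]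
      have hmem : q * α + s * 1 ∈ sumset 𝒜 (q + s) :=
        add_mem_sumset (mul_mem_sumset hαA q) (mul_mem_sumset h1 s)
      have heq : q * α + s * 1 = n := by rw [hqs]; ring
      rw [heq] at hmem
      exact sumset_mono h0 (by omega) hmem
    · rcases Nat.eq_zero_or_pos s with rfl | hs1
      · have hq : q ≤ 2 * α := by nlinarith
        have hmem : q * α ∈ sumset 𝒜 q := mul_mem_sumset hαA q
        have hqn : q * α = n := by rw [hqs]; ring
        rw [hqn] at hmem
        exact sumset_mono h0 hq hmem
      · obtain ⟨β, rfl⟩ : ∃ β, α = β + 1 := ⟨α - 1, by omega⟩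
        obtain ⟨d, hd⟩ : ∃ d, d + s = β + 1 := ⟨β + 1 - s, by omega⟩
        simp only [Nat.add_sub_cancel] at hbig hαm1
        have hqge : β ≤ q + 1 := by nlinarith
        obtain ⟨c, hc⟩ : ∃ c, c + d = q + 1 := ⟨q + 1 - d, by omega⟩
        have hmem : c * (β + 1) + d * β ∈ sumset 𝒜 (c + d) :=
          add_mem_sumset (mul_mem_sumset hαA c) (mul_mem_sumset hαm1 d)
        have heq : c * (β + 1) + d * β = n := by
          zify at hqs hd hc ⊢
          linear_combination (β + 1 : ℤ) * hc - hd - hqs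
        rw [heq, hc] at hmem
        have hq2 : q + 1 ≤ 2 * (β + 1) := by nlinarith
        exact sumset_mono h0 hq2 hmem

lemma rset_succ {k : ℕ}
    (h : sumset 𝒜 (k + 1) = ({0, α} : Finset ℕ) + sumset 𝒜 k) :
    sumset 𝒜 (k + 2) = ({0, α} : Finset ℕ) + sumset 𝒜 (k + 1) := by
  calc sumset 𝒜 (k + 2) = sumset 𝒜 (k + 1) + 𝒜 := rfl
    _ = (({0, α} : Finset ℕ) + sumset 𝒜 k) + 𝒜 := by rw [h]
    _ = ({0, α} : Finset ℕ) + (sumset 𝒜 k + 𝒜) := add_assoc _ _ _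
    _ = ({0, α} : Finset ℕ) + sumset 𝒜 (k + 1) := rfl

end Lemmas

/-- For smooth `𝒜`: `𝒜` has `(P₁)` iff `r(𝒜) = reg(𝒜)`. -/
theorem stmt_8 (𝒜 : Finset ℕ) (hne : 𝒜.Nonempty) (h0 : 0 ∈ 𝒜)
    (α : ℕ) (hα : α = 𝒜.max' hne) (hα2 : 2 ≤ α)
    (h1 : 1 ∈ 𝒜) (hαm1 : α - 1 ∈ 𝒜) :
    P1 𝒜 α ↔ rA 𝒜 α = regA 𝒜 := by
  have hαA : α ∈ 𝒜 := hα ▸ 𝒜.max'_mem hne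
  -- regularity facts
  have hRne : {m : ℕ | 1 ≤ m ∧ IsFull (sumset 𝒜 m)}.Nonempty :=
    ⟨2 * α, by omega, ⟨2 * α * α, full_two_alpha hne h0 hα hα2 h1 hαm1⟩⟩
  have hRmem : 1 ≤ regA 𝒜 ∧ IsFull (sumset 𝒜 (regA 𝒜)) := Nat.sInf_mem hRne
  have hRfull : sumset 𝒜 (regA 𝒜) = Finset.Iic (regA 𝒜 * α) := (full_iff hne hα).mp hRmem.2
  have hfull_of_ge : ∀ k, regA 𝒜 ≤ k → sumset 𝒜 k = Finset.Iic (k * α) :=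
    fun k hk => full_of_le hne hα h0 hRmem.1 hRfull hk
  have hnotfull : ∀ m, 1 ≤ m → m < regA 𝒜 → ¬ IsFull (sumset 𝒜 m) := by
    intro m hm1 hmR hful
    exact Nat.notMem_of_lt_sInf hmR ⟨hm1, hful⟩
  -- reduction number facts
  have hRr : regA 𝒜 ∈ {r : ℕ | sumset 𝒜 (r + 1) = ({0, α} : Finset ℕ) + sumset 𝒜 r} := by
    show sumset 𝒜 (regA 𝒜 + 1) = _
    rw [hfull_of_ge (regA 𝒜 + 1) (by omega), hRfull,
      zeroalpha_add_Iic (by nlinarith [hRmem.1])]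
    ring_nf
  have hrle : rA 𝒜 α ≤ regA 𝒜 := Nat.sInf_le hRr
  have hrmem : sumset 𝒜 (rA 𝒜 α + 1) = ({0, α} : Finset ℕ) + sumset 𝒜 (rA 𝒜 α) :=
    Nat.sInf_mem ⟨regA 𝒜, hRr⟩
  have hr1 : 1 ≤ rA 𝒜 α := by
    by_contra h
    have h0' : rA 𝒜 α = 0 := by omega
    rw [h0'] at hrmem
    have hA1 : 1 ∈ sumset 𝒜 1 := by
      simpa [sumset, Finset.singleton_add] using h1
    rw [hrmem] at hA1
    simp only [sumset, Finset.mem_add, Finset.mem_insert, Finset.mem_singleton] at hA1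
    obtain ⟨y, hy, z, hz, hyz⟩ := hA1
    omega
  have hrup : ∀ k, rA 𝒜 α ≤ k →
      sumset 𝒜 (k + 1) = ({0, α} : Finset ℕ) + sumset 𝒜 k := by
    intro k hk
    induction k with
    | zero =>
        have h' : rA 𝒜 α = 0 := by omega
        rw [h'] at hrmem; exact hrmem
    | succ n ih =>
        rcases Nat.lt_or_ge (rA 𝒜 α) (n + 1) with h' | h'
        · exact rset_succ (ih (by omega))
        · have h'' : rA 𝒜 α = n + 1 := by omega
          rw [h''] at hrmem; exact hrmem
  constructor
  · -- P1 → rA = regA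
    intro hP1
    by_contra hne'
    have hlt : rA 𝒜 α < regA 𝒜 := lt_of_le_of_ne hrle hne'
    have claim : ∀ k, ¬ IsFull (sumset 𝒜 (rA 𝒜 α + k)) := by
      intro k
      induction k with
      | zero => simpa using hnotfull _ hr1 hlt
      | succ n ih =>
          have h2 := hP1 _ ih
          intro hful
          apply h2
          have h3 : sumset 𝒜 (rA 𝒜 α + n + 1) =
              sumset 𝒜 (rA 𝒜 α + n) + ({0, α} : Finset ℕ) := by
            rw [hrup (rA 𝒜 α + n) (Nat.le_add_right _ _), add_comm]
          rw [← h3]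
          exact hful
    have := claim (regA 𝒜 - rA 𝒜 α)
    rw [Nat.add_sub_cancel' (le_of_lt hlt)] at this
    exact this hRmem.2
  · -- rA = regA → P1
    intro heq m hmnf
    have hm1 : 1 ≤ m := by
      by_contra h
      have hm0 : m = 0 := by omega
      exact hmnf ⟨0, by rw [hm0]; show ({0} : Finset ℕ) = _; ext x; simp [sumset]⟩
    have hmR : m < regA 𝒜 := by
      by_contra h
      exact hmnf ((full_iff hne hα).mpr (hfull_of_ge m (by omega)))
    have hmr : m < rA 𝒜 α := by omega
    have hm_notin : sumset 𝒜 (m + 1) ≠ ({0, α} : Finset ℕ) + sumset 𝒜 m :=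
      Nat.notMem_of_lt_sInf hmr
    rintro ⟨n, hn⟩
    have htop : (m + 1) * α ∈ sumset 𝒜 m + ({0, α} : Finset ℕ) := by
      have := Finset.add_mem_add (mul_mem_sumset hαA m)
        (show α ∈ ({0, α} : Finset ℕ) by simp)
      simpa [add_one_mul] using this
    have hub : ∀ x ∈ sumset 𝒜 m + ({0, α} : Finset ℕ), x ≤ (m + 1) * α := by
      intro x hx
      simp only [Finset.mem_add, Finset.mem_insert, Finset.mem_singleton] at hx
      obtain ⟨b, hb, c, hc, rfl⟩ := hx
      have hb' := le_of_mem_sumset hne hα hb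
      have : (m + 1) * α = m * α + α := by ring
      omega
    have hn_eq : n = (m + 1) * α := by
      have ha : (m + 1) * α ≤ n := by
        have := htop; rw [hn] at this; simpa using this
      have hb : n ≤ (m + 1) * α := hub n (by rw [hn]; simp)
      omega
    apply hm_notin
    apply Finset.Subset.antisymm
    · intro x hx
      have hxle : x ≤ (m + 1) * α := le_of_mem_sumset hne hα hx
      have hx' : x ∈ sumset 𝒜 m + ({0, α} : Finset ℕ) := by
        rw [hn, hn_eq]; simpa using hxle
      rw [add_comm] at hx'
      exact hx'
    · exact zeroalpha_add_subset hne hα h0 m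
end
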